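/- arXiv:math/0112248 — 3 statements merged into one kernel-verified Lean document; each statement's English description precedes it below -/
import Mathlib

section
/- Under the same assumptions, ζ̃ : H → A >⋊ H is an algebra homomorphism: ζ̃(1_H) = 1 and ζ̃(g g') = ζ̃(g) ζ̃(g') for all g, g' ∈ H. -/
open TensorProduct

/-- `A` is a unital right `H`-module algebra via the bilinear action `act` (written `a ◁ g`):
`a ◁ 1 = a`, `a ◁ (g g') = (a ◁ g) ◁ g'`, `(a a') ◁ g = (a ◁ g₍₁₎)(a' ◁ g₍₂₎)`,
and `1 ◁ g = ε(g) 1`. -/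
structure RightModuleAlgebra (k : Type) [Field k] (H A : Type) [Ring H] [Ring A]
    [HopfAlgebra k H] [Algebra k A] (act : A →ₗ[k] H →ₗ[k] A) : Prop where
  act_one : ∀ a : A, act a 1 = a
  act_mul : ∀ (a : A) (g g' : H), act a (g * g') = act (act a g) g'
  mul_act : ∀ (a a' : A) (g : H), act (a * a') g =
    LinearMap.mul' k A (TensorProduct.map (act a) (act a') (Coalgebra.comul g))
  one_act : ∀ g : H, act (1 : A) g = (Coalgebra.counit (R := k) g) • (1 : A)

/-- The cross-product (smash product) algebra `A >⋊ H`, realized as an ambient algebra `B`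
containing `H` and `A` via `ιH`, `ιA`, with the straightening relation
`a g = g₍₁₎ (a ◁ g₍₂₎)` and with `g ⊗ a ↦ ιH g * ιA a` a linear bijection `H ⊗ A ≃ B`. -/
structure SmashProduct (k : Type) [Field k] (H A B : Type) [Ring H] [Ring A] [Ring B]
    [HopfAlgebra k H] [Algebra k A] [Algebra k B]
    (act : A →ₗ[k] H →ₗ[k] A) : Type where
  ιH : H →ₐ[k] B
  ιA : A →ₐ[k] B
  straighten : ∀ (a : A) (g : H), ιA a * ιH g =
    LinearMap.mul' k B (TensorProduct.map ιH.toLinearMap (ιA.toLinearMap ∘ₗ act a)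
      (Coalgebra.comul g))
  mulMap_bij : Function.Bijective fun x : H ⊗[k] A =>
    LinearMap.mul' k B (TensorProduct.map ιH.toLinearMap ιA.toLinearMap x)

variable {k : Type} [Field k] {H A B : Type} [Ring H] [Ring A] [Ring B]
  [HopfAlgebra k H] [Algebra k A] [Algebra k B] {act : A →ₗ[k] H →ₗ[k] A}

/-- The decoupling map `ζ̃(g) = g₍₁₎ φ̃(S g₍₂₎)`, valued in `A >⋊ H`. -/
noncomputable def zeta (S : SmashProduct k H A B act) (φ : B →ₐ[k] A) : H →ₗ[k] B :=
  (LinearMap.mul' k B) ∘ₗ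
    (TensorProduct.map S.ιH.toLinearMap
      (S.ιA.toLinearMap ∘ₗ φ.toLinearMap ∘ₗ S.ιH.toLinearMap ∘ₗ
        (HopfAlgebra.antipode (R := k) (A := H)))) ∘ₗ Coalgebra.comul


/-! Write `ψ = φ̃ ∘ ι_H : H → A`, an algebra map, so that `ζ̃ = ι_H ⋆ (ι_A ∘ ψ ∘ S)` in the
convolution algebra of linear maps `H → A >⋊ H`, and `ψ ∘ S` is the convolution inverse of `ψ`.
Applying `φ̃` to the straightening relation `a g = g₍₁₎ (a ◁ g₍₂₎)` gives `ψ ⋆ (a ◁ -) = a ψ`;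
conjugating by `ψ ∘ S` turns this into `(a ◁ -) ⋆ (ψ ∘ S) = (ψ ∘ S) a`, and feeding that back
through the straightening relation shows that every `ζ̃(g)` commutes with `A`. Multiplicativity
follows, since `S(g g') = S(g') S(g)` gives
`ζ̃(g g') = g₍₁₎ ζ̃(g') φ̃(S g₍₂₎) = g₍₁₎ φ̃(S g₍₂₎) ζ̃(g') = ζ̃(g) ζ̃(g')`. -/

open Coalgebra HopfAlgebra WithConv

namespace LinearMap

section Convolution

variable {R C X : Type*} [CommSemiring R] [AddCommMonoid C] [Module R C] [Coalgebra R C]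
  [Semiring X] [Algebra R X]

lemma mulLeft_comp_convMul (x : X) (f g : C →ₗ[R] X) :
    toConv (mulLeft R x ∘ₗ f) * toConv g =
      toConv (mulLeft R x ∘ₗ (toConv f * toConv g).ofConv) := by
  ext c
  simp [(ℛ R c).convMul_apply, mul_assoc]

lemma convMul_mulRight_comp (x : X) (f g : C →ₗ[R] X) :
    toConv f * toConv (mulRight R x ∘ₗ g) =
      toConv (mulRight R x ∘ₗ (toConv f * toConv g).ofConv) := by
  ext c
  simp [(ℛ R c).convMul_apply, mul_assoc]

lemma mulLeft_comp_convOne (x : X) :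
    mulLeft R x ∘ₗ (1 : WithConv (C →ₗ[R] X)).ofConv =
      mulRight R x ∘ₗ (1 : WithConv (C →ₗ[R] X)).ofConv := by
  ext c
  simp [Algebra.commutes]

lemma convMul_eq_mulRight_comp_of_convMul_eq_mulLeft_comp {f u t : C →ₗ[R] X} {x : X}
    (hfu : toConv f * toConv u = 1) (huf : toConv u * toConv f = 1)
    (h : toConv f * toConv t = toConv (mulLeft R x ∘ₗ f)) :
    toConv t * toConv u = toConv (mulRight R x ∘ₗ u) := by
  calc toConv t * toConv u = toConv u * (toConv f * toConv t) * toConv u := by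
        rw [← mul_assoc, huf, one_mul]
    _ = toConv u * toConv (mulLeft R x ∘ₗ (1 : WithConv (C →ₗ[R] X)).ofConv) := by
        rw [h, mul_assoc, mulLeft_comp_convMul, hfu]
    _ = toConv (mulRight R x ∘ₗ u) := by
        rw [mulLeft_comp_convOne, convMul_mulRight_comp, toConv_ofConv, mul_one]

end Convolution

variable {R C X : Type*} [CommSemiring R] [Semiring C] [HopfAlgebra R C] [Semiring X]
  [Algebra R X]

lemma algHom_comp_antipode_mul_algHom (ψ : C →ₐ[R] X) :
    toConv (ψ.toLinearMap ∘ₗ antipode R) * toConv ψ.toLinearMap = 1 := by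
  ext c
  simp [(ℛ R c).convMul_apply, ← map_mul, ← map_sum, sum_antipode_mul_eq_algebraMap_counit]

lemma algHom_mul_algHom_comp_antipode (ψ : C →ₐ[R] X) :
    toConv ψ.toLinearMap * toConv (ψ.toLinearMap ∘ₗ antipode R) = 1 := by
  ext c
  simp [(ℛ R c).convMul_apply, ← map_mul, ← map_sum, sum_mul_antipode_eq_algebraMap_counit]

end LinearMap

open LinearMap

namespace SmashProduct

variable (S : SmashProduct k H A B act)

lemma mulLeft_ιA_comp_ιH (a : A) :
    toConv (mulLeft k (S.ιA a) ∘ₗ S.ιH.toLinearMap) =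
      toConv S.ιH.toLinearMap * toConv (S.ιA.toLinearMap ∘ₗ act a) := by
  ext g
  exact S.straighten a g

variable {S} {φ : B →ₐ[k] A}

lemma convMul_act (hφ : ∀ a : A, φ (S.ιA a) = a) (a : A) :
    toConv (φ.comp S.ιH).toLinearMap * toConv (act a) =
      toConv (mulLeft k a ∘ₗ (φ.comp S.ιH).toLinearMap) := by
  have hφA : φ.toLinearMap ∘ₗ S.ιA.toLinearMap = LinearMap.id := by
    ext b
    exact hφ b
  calc toConv (φ.comp S.ιH).toLinearMap * toConv (act a)
      = toConv (φ.toLinearMap ∘ₗ S.ιH.toLinearMap) *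
          toConv (φ.toLinearMap ∘ₗ S.ιA.toLinearMap ∘ₗ act a) := by
        rw [← comp_assoc, hφA, id_comp]; rfl
    _ = toConv (φ.toLinearMap ∘ₗ
          (toConv S.ιH.toLinearMap * toConv (S.ιA.toLinearMap ∘ₗ act a)).ofConv) := by
        rw [algHom_comp_convMul_distrib]
    _ = toConv (mulLeft k a ∘ₗ (φ.comp S.ιH).toLinearMap) := by
        rw [← S.mulLeft_ιA_comp_ιH a]
        ext g
        simp [hφ]

lemma act_convMul_antipode (hφ : ∀ a : A, φ (S.ιA a) = a) (a : A) :
    toConv (act a) * toConv ((φ.comp S.ιH).toLinearMap ∘ₗ antipode k) =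
      toConv (mulRight k a ∘ₗ (φ.comp S.ιH).toLinearMap ∘ₗ antipode k) :=
  convMul_eq_mulRight_comp_of_convMul_eq_mulLeft_comp (algHom_mul_algHom_comp_antipode _)
    (algHom_comp_antipode_mul_algHom _) (convMul_act hφ a)

end SmashProduct

section Zeta

variable {S : SmashProduct k H A B act} {φ : B →ₐ[k] A}

lemma toConv_zeta :
    toConv (zeta S φ) = toConv S.ιH.toLinearMap *
      toConv (S.ιA.toLinearMap ∘ₗ (φ.comp S.ιH).toLinearMap ∘ₗ antipode k) := rfl

lemma zeta_apply_eq_sum {ι : Type*} {g : H} (r : Repr k g ι) :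
    zeta S φ g =
      ∑ i ∈ r.index, S.ιH (r.left i) * S.ιA (φ (S.ιH (antipode k (r.right i)))) := by
  rw [← ofConv_toConv (zeta S φ), toConv_zeta, r.convMul_apply]
  rfl

lemma ιA_mul_zeta (hφ : ∀ a : A, φ (S.ιA a) = a) (a : A) (g : H) :
    S.ιA a * zeta S φ g = zeta S φ g * S.ιA a := by
  suffices toConv (mulLeft k (S.ιA a) ∘ₗ zeta S φ) =
      toConv (mulRight k (S.ιA a) ∘ₗ zeta S φ) from congr($this g)
  calc toConv (mulLeft k (S.ιA a) ∘ₗ zeta S φ)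
      = toConv S.ιH.toLinearMap * toConv (S.ιA.toLinearMap ∘ₗ act a) *
          toConv (S.ιA.toLinearMap ∘ₗ (φ.comp S.ιH).toLinearMap ∘ₗ antipode k) := by
        rw [← S.mulLeft_ιA_comp_ιH, mulLeft_comp_convMul, ← toConv_zeta]
    _ = toConv S.ιH.toLinearMap * toConv (S.ιA.toLinearMap ∘ₗ
          (toConv (act a) * toConv ((φ.comp S.ιH).toLinearMap ∘ₗ antipode k)).ofConv) := by
        rw [mul_assoc, algHom_comp_convMul_distrib]
    _ = toConv S.ιH.toLinearMap * toConv (mulRight k (S.ιA a) ∘ₗ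
          S.ιA.toLinearMap ∘ₗ (φ.comp S.ιH).toLinearMap ∘ₗ antipode k) := by
        rw [SmashProduct.act_convMul_antipode hφ]
        congr 1
        ext g
        simp
    _ = toConv (mulRight k (S.ιA a) ∘ₗ zeta S φ) := by
        rw [convMul_mulRight_comp, ← toConv_zeta]

lemma zeta_one : zeta S φ 1 = 1 := by
  simp [zeta, Algebra.TensorProduct.one_def]

lemma zeta_mul (hφ : ∀ a : A, φ (S.ιA a) = a) (g g' : H) :
    zeta S φ (g * g') = zeta S φ g * zeta S φ g' := by
  rw [zeta_apply_eq_sum ((ℛ k g).mul (ℛ k g')), zeta_apply_eq_sum (ℛ k g), Finset.sum_mul,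
    Repr.mul_index, Finset.sum_product]
  refine Finset.sum_congr rfl fun i _ => ?_
  rw [mul_assoc, ιA_mul_zeta hφ, zeta_apply_eq_sum (ℛ k g'), Finset.sum_mul, Finset.mul_sum]
  refine Finset.sum_congr rfl fun j _ => ?_
  simp only [Repr.mul_left, Repr.mul_right, antipode_mul_antidistrib, map_mul, mul_assoc]

end Zeta

theorem zeta_algHom_general
    (S : SmashProduct k H A B act) (φ : B →ₐ[k] A)
    (hφ : ∀ a : A, φ (S.ιA a) = a) :
    zeta S φ (1 : H) = 1 ∧
    ∀ g g' : H, zeta S φ (g * g') = zeta S φ g * zeta S φ g' :=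
  ⟨zeta_one, zeta_mul hφ⟩

/-- `ζ̃` is a (unital) algebra homomorphism. -/
theorem zeta_algHom
    (hMA : RightModuleAlgebra k H A act)
    (S : SmashProduct k H A B act) (φ : B →ₐ[k] A)
    (hφ : ∀ a : A, φ (S.ιA a) = a) :
    zeta S φ (1 : H) = 1 ∧
    ∀ g g' : H, zeta S φ (g * g') = zeta S φ g * zeta S φ g' :=
  zeta_algHom_general S φ hφ
end

section
/- Let H⁺, H⁻ be Hopf subalgebras of H with H = H⁺H⁻ = H⁻H⁺ (Gauss decomposition), and suppose there exist algebra homomorphisms φ̃± : A >⋊ H± → A restricting to the identity on A. Define ζ̃±(g) = g₍₁₎ φ̃±(S g₍₂₎) for g ∈ H±. Then each ζ̃± is an injective algebra homomorphism from H± into the commutant C̃ of A in A >⋊ H. -/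
open TensorProduct

variable {k : Type} [Field k] {H A B : Type} [Ring H] [Ring A] [Ring B]
  [HopfAlgebra k H] [Algebra k A] [Algebra k B] {act : A →ₗ[k] H →ₗ[k] A}

/-- The Gauss-decomposed setting: `H⁺`, `H⁻` are Hopf subalgebras of `H` (realized by
injective algebra embeddings `ιp`, `ιm` compatible with coproduct and antipode), with
`H = H⁺H⁻ = H⁻H⁺`, together with the cross-products `A >⋊ H`, `A >⋊ H⁺`, `A >⋊ H⁻` and
the embeddings `jp : A >⋊ H⁺ → A >⋊ H`, `jm : A >⋊ H⁻ → A >⋊ H`. -/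
structure GaussSetting (k : Type) [Field k] (H A B Hp Hm Bp Bm : Type)
    [Ring H] [Ring A] [Ring B] [Ring Hp] [Ring Hm] [Ring Bp] [Ring Bm]
    [HopfAlgebra k H] [HopfAlgebra k Hp] [HopfAlgebra k Hm]
    [Algebra k A] [Algebra k B] [Algebra k Bp] [Algebra k Bm]
    (act : A →ₗ[k] H →ₗ[k] A) (actp : A →ₗ[k] Hp →ₗ[k] A)
    (actm : A →ₗ[k] Hm →ₗ[k] A) : Type where
  S : SmashProduct k H A B act
  Sp : SmashProduct k Hp A Bp actp
  Sm : SmashProduct k Hm A Bm actm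
  ιp : Hp →ₐ[k] H
  ιm : Hm →ₐ[k] H
  ιp_inj : Function.Injective ιp
  ιm_inj : Function.Injective ιm
  ιp_comul : ∀ g : Hp, Coalgebra.comul (R := k) (ιp g) =
    TensorProduct.map ιp.toLinearMap ιp.toLinearMap (Coalgebra.comul g)
  ιm_comul : ∀ g : Hm, Coalgebra.comul (R := k) (ιm g) =
    TensorProduct.map ιm.toLinearMap ιm.toLinearMap (Coalgebra.comul g)
  ιp_antipode : ∀ g : Hp, HopfAlgebra.antipode (R := k) (ιp g) =
    ιp (HopfAlgebra.antipode (R := k) g)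
  ιm_antipode : ∀ g : Hm, HopfAlgebra.antipode (R := k) (ιm g) =
    ιm (HopfAlgebra.antipode (R := k) g)
  actp_eq : ∀ (a : A) (g : Hp), actp a g = act a (ιp g)
  actm_eq : ∀ (a : A) (g : Hm), actm a g = act a (ιm g)
  jp : Bp →ₐ[k] B
  jm : Bm →ₐ[k] B
  jp_H : ∀ g : Hp, jp (Sp.ιH g) = S.ιH (ιp g)
  jp_A : ∀ a : A, jp (Sp.ιA a) = S.ιA a
  jm_H : ∀ g : Hm, jm (Sm.ιH g) = S.ιH (ιm g)
  jm_A : ∀ a : A, jm (Sm.ιA a) = S.ιA a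
  gauss_pm : Submodule.span k {x : H | ∃ (u : Hp) (v : Hm), x = ιp u * ιm v} = ⊤
  gauss_mp : Submodule.span k {x : H | ∃ (u : Hm) (v : Hp), x = ιm u * ιp v} = ⊤

variable {Hp Hm Bp Bm : Type} [Ring Hp] [Ring Hm] [Ring Bp] [Ring Bm]
  [HopfAlgebra k Hp] [HopfAlgebra k Hm] [Algebra k Bp] [Algebra k Bm]
  {actp : A →ₗ[k] Hp →ₗ[k] A} {actm : A →ₗ[k] Hm →ₗ[k] A}

/-- The decoupling map `ζ̃⁺(g) = g₍₁₎ φ̃⁺(S g₍₂₎)`, viewed inside `A >⋊ H`. -/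
noncomputable def zetaP (G : GaussSetting k H A B Hp Hm Bp Bm act actp actm)
    (φp : Bp →ₐ[k] A) : Hp →ₗ[k] B :=
  G.jp.toLinearMap ∘ₗ zeta G.Sp φp

/-- The decoupling map `ζ̃⁻(g) = g₍₁₎ φ̃⁻(S g₍₂₎)`, viewed inside `A >⋊ H`. -/
noncomputable def zetaM (G : GaussSetting k H A B Hp Hm Bp Bm act actp actm)
    (φm : Bm →ₐ[k] A) : Hm →ₗ[k] B :=
  G.jm.toLinearMap ∘ₗ zeta G.Sm φm

/-!
Work in the convolution algebra of linear maps `H → A >⋊ H`. Put `β = ιA ∘ φ̃ ∘ ιH`, an algebra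
map, and `ν = β ∘ S`, so that `ζ̃ = ιH * ν` and `β * ν = ν * β = 1`. For `a ∈ A` let `c` be the
constant map `g ↦ ε(g) a` and `α = (a ◁ ·)`. Straightening says `c * ιH = ιH * α`; applying
`ιA ∘ φ̃` to it gives `β * α = c * β`, hence `α * ν = ν * c` and `c * ζ̃ = ζ̃ * c`, which is the
commutation of `ζ̃` with `A`. Multiplicativity follows because `ν` is antimultiplicative and takes
values in `A`, with which `ζ̃` commutes.

For injectivity, `ζ̃` is the bijection `H ⊗ A ≃ A >⋊ H` after `g ↦ g₍₁₎ ⊗ φ̃(S g₍₂₎)`, and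
`h ⊗ a ↦ h₍₁₎ ⊗ φ̃(h₍₂₎) a` turns the latter into `g ↦ g ⊗ 1`. For `ζ̃±` one inserts the
inclusion `H± ⊗ A → H ⊗ A`, injective since everything is flat over the field `k`.
-/

open Coalgebra WithConv

namespace LinearMap

variable {C Y : Type} [AddCommMonoid C] [Module k C] [Coalgebra k C] [Semiring Y] [Algebra k Y]

lemma toConv_mulLeft_comp (x : Y) (f : C →ₗ[k] Y) :
    toConv (mulLeft k x ∘ₗ f) = toConv (toSpanSingleton k Y x ∘ₗ counit) * toConv f := by
  ext c
  rw [convMul_apply, ← map_comp_rTensor, comp_apply (map _ _), rTensor_counit_comul]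
  simp

lemma toConv_mulRight_comp (x : Y) (f : C →ₗ[k] Y) :
    toConv (mulRight k x ∘ₗ f) = toConv f * toConv (toSpanSingleton k Y x ∘ₗ counit) := by
  ext c
  rw [convMul_apply, ← map_comp_lTensor, comp_apply (map _ _), lTensor_counit_comul]
  simp

lemma toConv_algHom_mul_toConv_comp_antipode {H' : Type} [Semiring H'] [HopfAlgebra k H']
    (f : H' →ₐ[k] Y) :
    toConv f.toLinearMap * toConv (f.toLinearMap ∘ₗ HopfAlgebra.antipode k) = 1 := by
  have h := algHom_comp_convMul_distrib f (toConv id) (toConv (HopfAlgebra.antipode k))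
  rw [id_mul_antipode] at h
  ext c
  simpa using (congr($h c)).symm

lemma toConv_comp_antipode_mul_toConv_algHom {H' : Type} [Semiring H'] [HopfAlgebra k H']
    (f : H' →ₐ[k] Y) :
    toConv (f.toLinearMap ∘ₗ HopfAlgebra.antipode k) * toConv f.toLinearMap = 1 := by
  have h := algHom_comp_convMul_distrib f (toConv (HopfAlgebra.antipode k)) (toConv id)
  rw [antipode_mul_id] at h
  ext c
  simpa using (congr($h c)).symm

end LinearMap

lemma injective_lTensor_comp_antipode_comp_comul [Nontrivial A] (χ : H →ₐ[k] A) :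
    Function.Injective
      (LinearMap.lTensor H (χ.toLinearMap ∘ₗ HopfAlgebra.antipode k) ∘ₗ comul) := by
  let i₁ : H →ₐ[k] H ⊗[k] A := Algebra.TensorProduct.includeLeft
  let u : H →ₐ[k] H ⊗[k] A := Algebra.TensorProduct.includeRight.comp χ
  let θ : H ⊗[k] A →ₗ[k] H ⊗[k] A := LinearMap.mul' k (H ⊗[k] A) ∘ₗ
    map (toConv i₁.toLinearMap * toConv u.toLinearMap).ofConv
      Algebra.TensorProduct.includeRight.toLinearMap
  have hθ : θ ∘ₗ LinearMap.lTensor H (χ.toLinearMap ∘ₗ HopfAlgebra.antipode k) ∘ₗ comul =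
      i₁.toLinearMap :=
    calc _ = (toConv i₁.toLinearMap * toConv u.toLinearMap *
          toConv (u.toLinearMap ∘ₗ HopfAlgebra.antipode k)).ofConv := by
          simp only [θ]
          rw [LinearMap.comp_assoc, ← LinearMap.comp_assoc _ (LinearMap.lTensor _ _),
            LinearMap.map_comp_lTensor]
          rfl
      _ = i₁.toLinearMap := by
          rw [mul_assoc, LinearMap.toConv_algHom_mul_toConv_comp_antipode, mul_one]
  refine Function.Injective.of_comp (f := θ) ?_
  rw [← LinearMap.coe_comp, hθ]
  exact Algebra.TensorProduct.includeLeft_injective (S := k) (algebraMap k A).injective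

namespace SmashProduct

noncomputable def mulMap (S : SmashProduct k H A B act) : H ⊗[k] A →ₗ[k] B :=
  LinearMap.mul' k B ∘ₗ map S.ιH.toLinearMap S.ιA.toLinearMap

lemma comp_mulMap {H' B' : Type} [Ring H'] [Ring B'] [HopfAlgebra k H'] [Algebra k B']
    {act' : A →ₗ[k] H' →ₗ[k] A} {S : SmashProduct k H A B act} {S' : SmashProduct k H' A B' act'}
    {ι : H' →ₐ[k] H} {j : B' →ₐ[k] B} (hjH : ∀ g, j (S'.ιH g) = S.ιH (ι g))
    (hjA : ∀ a, j (S'.ιA a) = S.ιA a) :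
    j.toLinearMap ∘ₗ S'.mulMap = S.mulMap ∘ₗ LinearMap.rTensor A ι.toLinearMap := by
  ext g a
  simp [mulMap, hjH, hjA]

variable (S : SmashProduct k H A B act)

lemma toConv_mulLeft_comp_ιH (a : A) :
    toConv (LinearMap.mulLeft k (S.ιA a) ∘ₗ S.ιH.toLinearMap) =
      toConv S.ιH.toLinearMap * toConv (S.ιA.toLinearMap ∘ₗ act a) := by
  ext g
  simpa using S.straighten a g

variable (φ : B →ₐ[k] A)

noncomputable def retractH : H →ₐ[k] B := (S.ιA.comp φ).comp S.ιH

lemma toConv_zeta : toConv (zeta S φ) =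
    toConv S.ιH.toLinearMap * toConv ((S.retractH φ).toLinearMap ∘ₗ HopfAlgebra.antipode k) :=
  rfl

variable {S φ}

lemma toConv_retractH_mul_act (hφ : ∀ a : A, φ (S.ιA a) = a) (a : A) :
    toConv (S.retractH φ).toLinearMap * toConv (S.ιA.toLinearMap ∘ₗ act a) =
      toConv (LinearMap.toSpanSingleton k B (S.ιA a) ∘ₗ counit) *
        toConv (S.retractH φ).toLinearMap := by
  have hα : (S.ιA.comp φ).toLinearMap ∘ₗ S.ιA.toLinearMap ∘ₗ act a =
      S.ιA.toLinearMap ∘ₗ act a := by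
    ext; simp [hφ]
  have hL : (S.ιA.comp φ).toLinearMap ∘ₗ LinearMap.mulLeft k (S.ιA a) ∘ₗ S.ιH.toLinearMap =
      LinearMap.mulLeft k (S.ιA a) ∘ₗ (S.retractH φ).toLinearMap := by
    ext; simp [retractH, hφ]
  have h := congrArg toConv (LinearMap.algHom_comp_convMul_distrib (S.ιA.comp φ)
    (toConv S.ιH.toLinearMap) (toConv (S.ιA.toLinearMap ∘ₗ act a)))
  rw [← toConv_mulLeft_comp_ιH] at h
  simp only [toConv_ofConv, hL, hα] at h
  rw [← LinearMap.toConv_mulLeft_comp, h]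
  rfl

lemma toConv_act_mul_retractH_antipode (hφ : ∀ a : A, φ (S.ιA a) = a) (a : A) :
    toConv (S.ιA.toLinearMap ∘ₗ act a) *
        toConv ((S.retractH φ).toLinearMap ∘ₗ HopfAlgebra.antipode k) =
      toConv ((S.retractH φ).toLinearMap ∘ₗ HopfAlgebra.antipode k) *
        toConv (LinearMap.toSpanSingleton k B (S.ιA a) ∘ₗ counit) := by
  set β := toConv (S.retractH φ).toLinearMap
  set ν := toConv ((S.retractH φ).toLinearMap ∘ₗ HopfAlgebra.antipode k)
  set α := toConv (S.ιA.toLinearMap ∘ₗ act a)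
  set c := toConv (LinearMap.toSpanSingleton k B (S.ιA a) ∘ₗ counit (A := H))
  have hνβ : ν * β = 1 := LinearMap.toConv_comp_antipode_mul_toConv_algHom _
  have hβν : β * ν = 1 := LinearMap.toConv_algHom_mul_toConv_comp_antipode _
  calc α * ν = ν * (β * α) * ν := by rw [← mul_assoc ν, hνβ, one_mul]
    _ = ν * c * (β * ν) := by
      rw [toConv_retractH_mul_act hφ, mul_assoc ν, mul_assoc ν, mul_assoc c]
    _ = ν * c := by rw [hβν, mul_one]

lemma zeta_mul_ιA (hφ : ∀ a : A, φ (S.ιA a) = a) (g : H) (a : A) :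
    zeta S φ g * S.ιA a = S.ιA a * zeta S φ g := by
  have h : toConv (LinearMap.mulRight k (S.ιA a) ∘ₗ zeta S φ) =
      toConv (LinearMap.mulLeft k (S.ιA a) ∘ₗ zeta S φ) := by
    rw [LinearMap.toConv_mulRight_comp, LinearMap.toConv_mulLeft_comp, toConv_zeta, mul_assoc,
      ← toConv_act_mul_retractH_antipode hφ, ← mul_assoc, ← toConv_mulLeft_comp_ιH,
      LinearMap.toConv_mulLeft_comp, mul_assoc]
  simpa using congr($h g)

lemma zeta_one : zeta S φ 1 = 1 := by
  simp [zeta, Bialgebra.comul_one, Algebra.TensorProduct.one_def]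

lemma zeta_apply_repr {g : H} {ι : Type*} (r : Coalgebra.Repr k g ι) :
    zeta S φ g =
      ∑ i ∈ r.index, S.ιH (r.left i) * S.retractH φ (HopfAlgebra.antipode k (r.right i)) :=
  r.convMul_apply _ _

lemma retractH_antipode_mul (g g' : H) :
    S.retractH φ (HopfAlgebra.antipode k (g * g')) =
      S.retractH φ (HopfAlgebra.antipode k g') * S.retractH φ (HopfAlgebra.antipode k g) := by
  rw [HopfAlgebra.antipode_mul_antidistrib, map_mul]

lemma zeta_mul (hφ : ∀ a : A, φ (S.ιA a) = a) (g g' : H) :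
    zeta S φ (g * g') = zeta S φ g * zeta S φ g' := by
  set ν : H → B := fun x => S.retractH φ (HopfAlgebra.antipode k x)
  obtain ⟨r, r'⟩ := (ℛ k g, ℛ k g')
  calc zeta S φ (g * g')
      = ∑ i ∈ r.index, S.ιH (r.left i) * (zeta S φ g' * ν (r.right i)) := by
        rw [zeta_apply_repr (r.mul r'), Coalgebra.Repr.mul_index, Finset.sum_product,
          zeta_apply_repr r']
        simp [ν, retractH_antipode_mul, Finset.mul_sum, Finset.sum_mul, mul_assoc]
    _ = ∑ i ∈ r.index, S.ιH (r.left i) * (ν (r.right i) * zeta S φ g') := by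
        simp only [ν, retractH, AlgHom.comp_apply, zeta_mul_ιA hφ]
    _ = zeta S φ g * zeta S φ g' := by
        simp only [ν, zeta_apply_repr r, Finset.sum_mul, mul_assoc]

lemma zeta_eq_mulMap_comp : zeta S φ = S.mulMap ∘ₗ
    LinearMap.lTensor H ((φ.comp S.ιH).toLinearMap ∘ₗ HopfAlgebra.antipode k) ∘ₗ comul := by
  rw [mulMap, LinearMap.comp_assoc, ← LinearMap.comp_assoc _ (LinearMap.lTensor _ _),
    LinearMap.map_comp_lTensor]
  rfl

variable {H' B' : Type} [Ring H'] [Ring B'] [HopfAlgebra k H'] [Algebra k B']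
  {act' : A →ₗ[k] H' →ₗ[k] A} {S' : SmashProduct k H' A B' act'} {φ' : B' →ₐ[k] A}
  {ι : H' →ₐ[k] H} {j : B' →ₐ[k] B}

lemma comp_zeta_injective_hom_commutant [Nontrivial A] (hι : Function.Injective ι)
    (hjH : ∀ g, j (S'.ιH g) = S.ιH (ι g)) (hjA : ∀ a, j (S'.ιA a) = S.ιA a)
    (hφ' : ∀ a : A, φ' (S'.ιA a) = a) :
    Function.Injective (j.toLinearMap ∘ₗ zeta S' φ') ∧ (j.toLinearMap ∘ₗ zeta S' φ') 1 = 1 ∧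
      (∀ g g' : H', (j.toLinearMap ∘ₗ zeta S' φ') (g * g') =
        (j.toLinearMap ∘ₗ zeta S' φ') g * (j.toLinearMap ∘ₗ zeta S' φ') g') ∧
      ∀ (g : H') (a : A), (j.toLinearMap ∘ₗ zeta S' φ') g * S.ιA a =
        S.ιA a * (j.toLinearMap ∘ₗ zeta S' φ') g := by
  refine ⟨?_, ?_, fun g g' => ?_, fun g a => ?_⟩
  · rw [zeta_eq_mulMap_comp, ← LinearMap.comp_assoc, comp_mulMap hjH hjA, LinearMap.comp_assoc,
      LinearMap.coe_comp, LinearMap.coe_comp]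
    exact S.mulMap_bij.injective.comp
      ((Module.Flat.rTensor_preserves_injective_linearMap _ hι).comp
        (injective_lTensor_comp_antipode_comp_comul _))
  · simp [zeta_one]
  · simp [zeta_mul hφ']
  · simpa [hjA] using congrArg j (zeta_mul_ιA hφ' g a)

end SmashProduct

theorem zetaPM_injective_hom_commutant_general [Nontrivial A]
    (G : GaussSetting k H A B Hp Hm Bp Bm act actp actm)
    (φp : Bp →ₐ[k] A) (φm : Bm →ₐ[k] A)
    (hφp : ∀ a : A, φp (G.Sp.ιA a) = a) (hφm : ∀ a : A, φm (G.Sm.ιA a) = a) :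
    (Function.Injective (zetaP G φp) ∧ zetaP G φp 1 = 1 ∧
      (∀ g g' : Hp, zetaP G φp (g * g') = zetaP G φp g * zetaP G φp g') ∧
      ∀ (g : Hp) (a : A), zetaP G φp g * G.S.ιA a = G.S.ιA a * zetaP G φp g) ∧
    (Function.Injective (zetaM G φm) ∧ zetaM G φm 1 = 1 ∧
      (∀ g g' : Hm, zetaM G φm (g * g') = zetaM G φm g * zetaM G φm g') ∧
      ∀ (g : Hm) (a : A), zetaM G φm g * G.S.ιA a = G.S.ιA a * zetaM G φm g) :=
  ⟨SmashProduct.comp_zeta_injective_hom_commutant G.ιp_inj G.jp_H G.jp_A hφp,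
    SmashProduct.comp_zeta_injective_hom_commutant G.ιm_inj G.jm_H G.jm_A hφm⟩

/-- each `ζ̃±` is an injective algebra homomorphism from `H±` into the
commutant of `A` in `A >⋊ H`. -/
theorem zetaPM_injective_hom_commutant [Nontrivial A]
    (hMA : RightModuleAlgebra k H A act)
    (G : GaussSetting k H A B Hp Hm Bp Bm act actp actm)
    (φp : Bp →ₐ[k] A) (φm : Bm →ₐ[k] A)
    (hφp : ∀ a : A, φp (G.Sp.ιA a) = a) (hφm : ∀ a : A, φm (G.Sm.ιA a) = a) :
    (Function.Injective (zetaP G φp) ∧ zetaP G φp 1 = 1 ∧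
      (∀ g g' : Hp, zetaP G φp (g * g') = zetaP G φp g * zetaP G φp g') ∧
      ∀ (g : Hp) (a : A), zetaP G φp g * G.S.ιA a = G.S.ιA a * zetaP G φp g) ∧
    (Function.Injective (zetaM G φm) ∧ zetaM G φm 1 = 1 ∧
      (∀ g g' : Hm, zetaM G φm (g * g') = zetaM G φm g * zetaM G φm g') ∧
      ∀ (g : Hm) (a : A), zetaM G φm g * G.S.ιA a = G.S.ιA a * zetaM G φm g) :=
  zetaPM_injective_hom_commutant_general G φp φm hφp hφm
end

section
/- Suppose H is a Hopf *-algebra, A a H-module *-algebra, and A >⋊ H is equipped with the induced *-structure. If φ̃ : A >⋊ H → A is a *-homomorphism, then ζ̃(g) = g₍₁₎ φ̃(S g₍₂₎) is also a *-homomorphism, i.e., ζ̃(g*) = ζ̃(g)* for all g ∈ H. -/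
/-!
Write `η = φ̃ ∘ ι_H`, an algebra map `H → A`. Applying `φ̃` to the straightening relation gives
`a η(x) = η(x₁) (a ◁ x₂)`, and convolving with `η ∘ S` yields `a ◁ x = η(S x₁) a η(x₂)`.
The `*`-hypotheses make `S` invertible with `S⁻¹ x = (S x*)*`, so that
`ζ̃(g)* = η(S⁻¹ g₂*) g₁*` with `Δ(g*) = g₁* ⊗ g₂*`. Straightening `η(S⁻¹ x₂) x₁` in `A >⋊ H`
and using the formula for `◁` together with `S⁻¹(x₂) x₁ = ε(x)` turns it into
`x₁ η(S x₂) = ζ̃(x)`.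
-/

open TensorProduct

variable {k : Type} [Field k] {H A B : Type} [Ring H] [Ring A] [Ring B]
  [HopfAlgebra k H] [Algebra k A] [Algebra k B] {act : A →ₗ[k] H →ₗ[k] A}

open Coalgebra HopfAlgebra

theorem Coalgebra.sum_counit_right_smul {R C : Type*} [CommSemiring R] [AddCommMonoid C]
    [Module R C] [Coalgebra R C] {c : C} {ι : Type*} (r : Repr R c ι) :
    ∑ i ∈ r.index, counit (R := R) (r.right i) • r.left i = c := by
  simpa only [map_sum, _root_.TensorProduct.rid_tmul, one_smul] using
    congrArg (_root_.TensorProduct.rid R C) (sum_tmul_counit_eq r)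

namespace HopfAlgebra

variable {R C : Type*} [CommSemiring R] [Semiring C] [HopfAlgebra R C] {e : C ≃ₗ[R] C}

theorem symm_mul_antidistrib (he : ∀ c, e c = antipode R c) (u v : C) :
    e.symm (u * v) = e.symm v * e.symm u := by
  apply e.injective
  rw [e.apply_symm_apply, he, antipode_mul_antidistrib, ← he, ← he, e.apply_symm_apply,
    e.apply_symm_apply]

theorem sum_symm_mul_eq_algebraMap_counit (he : ∀ c, e c = antipode R c) {c : C} {ι : Type*}
    (r : Repr R c ι) :
    ∑ i ∈ r.index, e.symm (r.right i) * r.left i = algebraMap R C (counit c) := by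
  have hS : ∀ x, e.symm (antipode R x) = x := fun x => by rw [← he, e.symm_apply_apply]
  have h1 : e.symm 1 = 1 := by simpa using hS 1
  calc ∑ i ∈ r.index, e.symm (r.right i) * r.left i
      = e.symm (∑ i ∈ r.index, antipode R (r.left i) * r.right i) := by
        simp only [map_sum, symm_mul_antidistrib he, hS]
    _ = algebraMap R C (counit c) := by
        rw [sum_antipode_mul_eq_algebraMap_counit, Algebra.algebraMap_eq_smul_one, map_smul, h1]

end HopfAlgebra

namespace SmashProduct

variable (S : SmashProduct k H A B act)

theorem ιA_mul_ιH_eq_sum (a : A) {x : H} {ι : Type*} (r : Repr k x ι) :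
    S.ιA a * S.ιH x = ∑ i ∈ r.index, S.ιH (r.left i) * S.ιA (act a (r.right i)) := by
  simpa [← r.eq, map_sum] using S.straighten a x

theorem zeta_eq_sum (φ : B →ₐ[k] A) {x : H} {ι : Type*} (r : Repr k x ι) :
    zeta S φ x = ∑ i ∈ r.index, S.ιH (r.left i) * S.ιA (φ (S.ιH (antipode k (r.right i)))) := by
  simp [zeta, ← r.eq, map_sum]

variable {S} {φ : B →ₐ[k] A}

theorem mul_apply_ιH_eq_sum (hφ : ∀ a, φ (S.ιA a) = a) (a : A) {x : H} {ι : Type*}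
    (r : Repr k x ι) :
    a * φ (S.ιH x) = ∑ i ∈ r.index, φ (S.ιH (r.left i)) * act a (r.right i) := by
  simpa only [map_mul, hφ, map_sum] using congrArg φ (S.ιA_mul_ιH_eq_sum a r)

theorem act_eq_sum_antipode (hφ : ∀ a, φ (S.ιA a) = a) (a : A) {x : H} {ι : Type*}
    (r : Repr k x ι) :
    act a x = ∑ i ∈ r.index,
      φ (S.ιH (antipode k (r.left i))) * (a * φ (S.ιH (r.right i))) := by
  let rl i : Repr k (r.left i) (H × H) := ℛ k _
  let rr i : Repr k (r.right i) (H × H) := ℛ k _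
  let η := (φ.comp S.ιH).toLinearMap
  have coassoc := congrArg (LinearMap.mul' k A ∘ₗ TensorProduct.map (η ∘ₗ antipode k)
    (LinearMap.mul' k A ∘ₗ TensorProduct.map η (act a))) (sum_tmul_tmul_eq r rl rr)
  simp only [map_sum, LinearMap.comp_apply, TensorProduct.map_tmul, LinearMap.mul'_apply,
    AlgHom.toLinearMap_apply, AlgHom.comp_apply, η] at coassoc
  symm
  calc ∑ i ∈ r.index, φ (S.ιH (antipode k (r.left i))) * (a * φ (S.ιH (r.right i)))
      = ∑ i ∈ r.index, ∑ j ∈ (rr i).index, φ (S.ιH (antipode k (r.left i))) *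
          (φ (S.ιH ((rr i).left j)) * act a ((rr i).right j)) := by
        refine Finset.sum_congr rfl fun i _ => ?_
        rw [mul_apply_ιH_eq_sum hφ a (rr i), Finset.mul_sum]
    _ = ∑ i ∈ r.index, (∑ p ∈ (rl i).index,
          φ (S.ιH (antipode k ((rl i).left p) * (rl i).right p))) * act a (r.right i) := by
        simp only [← coassoc, Finset.sum_mul, map_mul, mul_assoc]
    _ = ∑ i ∈ r.index, counit (R := k) (r.left i) • act a (r.right i) := by
        simp only [← map_sum, sum_antipode_mul_eq_algebraMap_counit, AlgHom.commutes,
          Algebra.smul_def]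
    _ = act a x := by
        simp only [← map_smul, ← map_sum, sum_counit_smul]

theorem sum_act_symm_eq_antipode (hφ : ∀ a, φ (S.ιA a) = a) {e : H ≃ₗ[k] H}
    (he : ∀ z, e z = antipode k z) {y : H} {ι : Type*} (r : Repr k y ι) :
    ∑ i ∈ r.index, act (φ (S.ιH (e.symm (r.right i)))) (r.left i) =
      φ (S.ιH (antipode k y)) := by
  let rl i : Repr k (r.left i) (H × H) := ℛ k _
  let rr i : Repr k (r.right i) (H × H) := ℛ k _
  let η := (φ.comp S.ιH).toLinearMap
  have coassoc := congrArg (LinearMap.mul' k A ∘ₗ TensorProduct.map (η ∘ₗ antipode k)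
    (TensorProduct.lift ((LinearMap.mul k A ∘ₗ η ∘ₗ e.symm.toLinearMap).compl₂ η).flip))
    (sum_tmul_tmul_eq r rl rr)
  simp only [map_sum, LinearMap.comp_apply, TensorProduct.map_tmul, LinearMap.mul'_apply,
    TensorProduct.lift.tmul, LinearMap.flip_apply, LinearMap.compl₂_apply, LinearMap.mul_apply',
    LinearEquiv.coe_coe, AlgHom.toLinearMap_apply, AlgHom.comp_apply, η] at coassoc
  calc ∑ i ∈ r.index, act (φ (S.ιH (e.symm (r.right i)))) (r.left i)
      = ∑ i ∈ r.index, ∑ p ∈ (rl i).index, φ (S.ιH (antipode k ((rl i).left p))) *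
          (φ (S.ιH (e.symm (r.right i))) * φ (S.ιH ((rl i).right p))) :=
        Finset.sum_congr rfl fun i _ => act_eq_sum_antipode hφ _ (rl i)
    _ = ∑ i ∈ r.index, φ (S.ιH (antipode k (r.left i))) *
          φ (S.ιH (∑ j ∈ (rr i).index, e.symm ((rr i).right j) * (rr i).left j)) := by
        simp only [coassoc, map_sum, map_mul, Finset.mul_sum]
    _ = ∑ i ∈ r.index, counit (R := k) (r.right i) • φ (S.ιH (antipode k (r.left i))) := by
        simp only [sum_symm_mul_eq_algebraMap_counit he, AlgHom.commutes, Algebra.commutes,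
          Algebra.smul_def]
    _ = φ (S.ιH (antipode k y)) := by
        simp only [← map_smul, ← map_sum, sum_counit_right_smul]

theorem sum_ιA_symm_mul_ιH_eq_zeta (hφ : ∀ a, φ (S.ιA a) = a) {e : H ≃ₗ[k] H}
    (he : ∀ z, e z = antipode k z) {x : H} {ι : Type*} (r : Repr k x ι) :
    ∑ i ∈ r.index, S.ιA (φ (S.ιH (e.symm (r.right i)))) * S.ιH (r.left i) = zeta S φ x := by
  let rl i : Repr k (r.left i) (H × H) := ℛ k _
  let rr i : Repr k (r.right i) (H × H) := ℛ k _
  let η := (φ.comp S.ιH).toLinearMap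
  have coassoc := congrArg (LinearMap.mul' k B ∘ₗ TensorProduct.map S.ιH.toLinearMap
    (S.ιA.toLinearMap ∘ₗ TensorProduct.lift (act ∘ₗ η ∘ₗ e.symm.toLinearMap).flip))
    (sum_tmul_tmul_eq r rl rr)
  simp only [map_sum, LinearMap.comp_apply, TensorProduct.map_tmul, LinearMap.mul'_apply,
    TensorProduct.lift.tmul, LinearMap.flip_apply, LinearEquiv.coe_coe,
    AlgHom.toLinearMap_apply, AlgHom.comp_apply, η] at coassoc
  calc ∑ i ∈ r.index, S.ιA (φ (S.ιH (e.symm (r.right i)))) * S.ιH (r.left i)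
      = ∑ i ∈ r.index, ∑ p ∈ (rl i).index, S.ιH ((rl i).left p) *
          S.ιA (act (φ (S.ιH (e.symm (r.right i)))) ((rl i).right p)) :=
        Finset.sum_congr rfl fun i _ => S.ιA_mul_ιH_eq_sum _ (rl i)
    _ = ∑ i ∈ r.index, S.ιH (r.left i) *
          S.ιA (∑ j ∈ (rr i).index,
            act (φ (S.ιH (e.symm ((rr i).right j)))) ((rr i).left j)) := by
        simp only [coassoc, map_sum, Finset.mul_sum]
    _ = zeta S φ x := by
        simp only [sum_act_symm_eq_antipode hφ he, zeta_eq_sum S φ r]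

end SmashProduct

theorem zeta_star_general
    [StarRing H] [StarRing A] [StarRing B]
    (S : SmashProduct k H A B act)
    (hstarH : ∀ g : H, star (S.ιH g) = S.ιH (star g))
    (hstarA : ∀ a : A, star (S.ιA a) = S.ιA (star a))
    (hcomul_star : ∀ g : H, ∃ (n : ℕ) (g1 g2 : Fin n → H),
      Coalgebra.comul (R := k) g = ∑ i, g1 i ⊗ₜ[k] g2 i ∧
      Coalgebra.comul (R := k) (star g) = ∑ i, star (g1 i) ⊗ₜ[k] star (g2 i))
    (hantipode_star : ∀ g : H,
      HopfAlgebra.antipode (R := k) (star (HopfAlgebra.antipode (R := k) (star g))) = g)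
    (φ : B →ₐ[k] A) (hφ : ∀ a : A, φ (S.ιA a) = a)
    (hφstar : ∀ b : B, φ (star b) = star (φ b)) :
    ∀ g : H, zeta S φ (star g) = star (zeta S φ g) := by
  intro g
  obtain ⟨n, g1, g2, hg, hg_star⟩ := hcomul_star g
  let e : H ≃ₗ[k] H :=
    { antipode k with
      invFun := fun z => star (antipode k (star z))
      left_inv := fun z => by simpa using congrArg star (hantipode_star (star z))
      right_inv := hantipode_star }
  let r : Repr k g (Fin n) := ⟨Finset.univ, g1, g2, hg.symm⟩
  let r_star : Repr k (star g) (Fin n) :=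
    ⟨Finset.univ, fun i => star (g1 i), fun i => star (g2 i), hg_star.symm⟩
  rw [← SmashProduct.sum_ιA_symm_mul_ιH_eq_zeta hφ (e := e) (fun _ => rfl) r_star,
    SmashProduct.zeta_eq_sum S φ r, star_sum]
  refine Finset.sum_congr rfl fun i _ => ?_
  simp [r, r_star, e, star_mul, hstarA, hstarH, ← hφstar]

/-- in the Hopf `*`-algebra setting, if `φ̃ : A >⋊ H → A` is a
`*`-homomorphism then so is `ζ̃`, i.e. `ζ̃(g*) = ζ̃(g)*` for all `g ∈ H`. -/
theorem zeta_star
    [StarRing k] [StarRing H] [StarRing A] [StarRing B]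
    (hMA : RightModuleAlgebra k H A act)
    (S : SmashProduct k H A B act)
    (hstarH : ∀ g : H, star (S.ιH g) = S.ιH (star g))
    (hstarA : ∀ a : A, star (S.ιA a) = S.ιA (star a))
    (hcomul_star : ∀ g : H, ∃ (n : ℕ) (g1 g2 : Fin n → H),
      Coalgebra.comul (R := k) g = ∑ i, g1 i ⊗ₜ[k] g2 i ∧
      Coalgebra.comul (R := k) (star g) = ∑ i, star (g1 i) ⊗ₜ[k] star (g2 i))
    (hantipode_star : ∀ g : H,
      HopfAlgebra.antipode (R := k) (star (HopfAlgebra.antipode (R := k) (star g))) = g)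
    (φ : B →ₐ[k] A) (hφ : ∀ a : A, φ (S.ιA a) = a)
    (hφstar : ∀ b : B, φ (star b) = star (φ b)) :
    ∀ g : H, zeta S φ (star g) = star (zeta S φ g) :=
  zeta_star_general S hstarH hstarA hcomul_star hantipode_star φ hφ hφstar
end
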